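/- Let u be a nonzero linear functional on 𝒫 satisfying D_{q,ω}(φu) = ψu, where φ has degree at most 2 and ψ has degree at most 1, and set u^[1] := L_{q,ω}(φu). Let (Q_n)_{n≥0} be any simple set of polynomials (deg Q_n = n for all n), and for each n ≥ 0 define R_{n+1} := φ·(D*_{q,ω}Q_n) + q·ψ·Q_n. Then the functional equation D_{1/q,−ω/q}(Q_n·u^[1]) = R_{n+1}·u holds in 𝒫* for every n ≥ 0. -/

import Mathlib

open Polynomial

noncomputable section

namespace HahnOPSPaper

/-- The algebraic dual of the space of complex polynomials. -/
abbrev PDual : Type := Module.Dual ℂ (Polynomial ℂ)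

/-- Left multiplication of a functional by a polynomial: `⟨φu, f⟩ = ⟨u, φf⟩`. -/
def pMul (φ : Polynomial ℂ) (u : PDual) : PDual := u ∘ₗ LinearMap.mulLeft ℂ φ

/-- Distributional derivative: `⟨Du, f⟩ = -⟨u, f'⟩`. -/
def dDeriv (u : PDual) : PDual :=
  -(u ∘ₗ (Polynomial.derivative : Polynomial ℂ →ₗ[ℂ] Polynomial ℂ))

/-- The q-bracket `[n]_q = 1 + q + ⋯ + q^(n-1)`. -/
def qBracket (q : ℂ) (n : ℕ) : ℂ := ∑ i ∈ Finset.range n, q ^ i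

/-- q-factorial `[n]_q!`. -/
def qFact (q : ℂ) (n : ℕ) : ℂ := ∏ i ∈ Finset.range n, qBracket q (i + 1)

/-- `D` is Hahn's operator `D_{q,ω}`, i.e. the (unique, for `(q,ω) ≠ (1,0)`) linear operator
with `((q-1)x + ω)·(Df)(x) = f(qx+ω) - f(x)`. -/
def IsHahn (q ω : ℂ) (D : Polynomial ℂ →ₗ[ℂ] Polynomial ℂ) : Prop :=
  ∀ f : Polynomial ℂ, (C (q - 1) * X + C ω) * D f = f.comp (C q * X + C ω) - f

/-- The operator `(L_{q,ω} f)(x) = f(qx + ω)`. -/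
def Lop (q ω : ℂ) : Polynomial ℂ →ₗ[ℂ] Polynomial ℂ :=
  (aeval (C q * X + C ω)).toLinearMap

/-- The distributional Hahn operator `D_{q,ω}` on the dual, built from the ordinary operator
`D*_{q,ω} = D_{1/q,-ω/q}`: `⟨D_{q,ω}u, f⟩ = -q⁻¹·⟨u, D*_{q,ω}f⟩`. -/
def hahnDual (q : ℂ) (Dstar : Polynomial ℂ →ₗ[ℂ] Polynomial ℂ) (u : PDual) : PDual :=
  (-q⁻¹) • (u ∘ₗ Dstar)

/-- The distributional operator `L_{q,ω}`: `⟨L_{q,ω}u, f⟩ = q⁻¹·⟨u, L_{1/q,-ω/q}f⟩`. -/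
def LDual (q ω : ℂ) (u : PDual) : PDual := q⁻¹ • (u ∘ₗ Lop q⁻¹ (-ω / q))

/-- A functional is regular if it admits a monic orthogonal polynomial sequence. -/
def IsRegularFunc (u : PDual) : Prop :=
  ∃ P : ℕ → Polynomial ℂ, (∀ n, (P n).Monic ∧ (P n).natDegree = n) ∧
    (∀ m n, m ≠ n → u (P m * P n) = 0) ∧ (∀ n, u (P n ^ 2) ≠ 0)

/-- `P` is the monic OPS with respect to `u`. -/
def IsMonicOPS (u : PDual) (P : ℕ → Polynomial ℂ) : Prop :=
  (∀ n, (P n).Monic ∧ (P n).natDegree = n) ∧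
    (∀ m n, m ≠ n → u (P m * P n) = 0) ∧ (∀ n, u (P n ^ 2) ≠ 0)

/-- Continuous case: `d_n = d + a·n`. -/
def ddC (a d : ℂ) (n : ℕ) : ℂ := d + a * n

/-- Continuous case: `e_n = e + b·n`. -/
def eeC (b e : ℂ) (n : ℕ) : ℂ := e + b * n

/-- Continuous case: `β_n = n·e_{n-1}/d_{2n-2} - (n+1)·e_n/d_{2n}`. -/
def betaC (a b d e : ℂ) (n : ℕ) : ℂ :=
  n * eeC b e (n - 1) / ddC a d (2 * n - 2) - (n + 1) * eeC b e n / ddC a d (2 * n)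

/-- Continuous case: `γ_{n+1} = -((n+1)·d_{n-1}/(d_{2n-1}·d_{2n+1}))·φ(-e_n/d_{2n})`. -/
def gammaC (a b d e : ℂ) (φ : Polynomial ℂ) (n : ℕ) : ℂ :=
  -((n + 1) * ddC a d (n - 1) / (ddC a d (2 * n - 1) * ddC a d (2 * n + 1))) *
    φ.eval (-(eeC b e n) / ddC a d (2 * n))

/-- `d_n = d·q^n + a·[n]_q`. -/
def ddQ (q a d : ℂ) (n : ℕ) : ℂ := d * q ^ n + a * qBracket q n

/-- `e_n = e·q^n + (ω·d_n + b)·[n]_q`. -/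
def eeQ (q ω a b d e : ℂ) (n : ℕ) : ℂ :=
  e * q ^ n + (ω * ddQ q a d n + b) * qBracket q n

/-- `β_n = ω[n]_q + [n]_q·e_{n-1}/d_{2n-2} - [n+1]_q·e_n/d_{2n}`. -/
def betaQ (q ω a b d e : ℂ) (n : ℕ) : ℂ :=
  ω * qBracket q n + qBracket q n * eeQ q ω a b d e (n - 1) / ddQ q a d (2 * n - 2)
    - qBracket q (n + 1) * eeQ q ω a b d e n / ddQ q a d (2 * n)

/-- `γ_{n+1} = -(q^n·[n+1]_q·d_{n-1}/(d_{2n-1}·d_{2n+1}))·φ(-e_n/d_{2n})`. -/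
def gammaQ (q ω a b d e : ℂ) (φ : Polynomial ℂ) (n : ℕ) : ℂ :=
  -(q ^ n * qBracket q (n + 1) * ddQ q a d (n - 1) /
      (ddQ q a d (2 * n - 1) * ddQ q a d (2 * n + 1))) *
    φ.eval (-(eeQ q ω a b d e n) / ddQ q a d (2 * n))

/-- `Φ(x;n) = ∏_{j=1}^n φ(q^j x + ω[j]_q)`. -/
def PhiQ (q ω : ℂ) (φ : Polynomial ℂ) (n : ℕ) : Polynomial ℂ :=
  ∏ j ∈ Finset.range n, φ.comp (C (q ^ (j + 1)) * X + C (ω * qBracket q (j + 1)))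

/-- `k_n = q^{n(n-3)/2}·∏_{j=0}^{n-1} d_{n+j-1}⁻¹`. -/
def kQ (q a d : ℂ) (n : ℕ) : ℂ :=
  q ^ (((n : ℤ) * ((n : ℤ) - 3)) / 2) * ∏ j ∈ Finset.range n, (ddQ q a d (n + j - 1))⁻¹

/-! With `σ(x) = qx + ω`, pairing both sides with a test polynomial `f` gives
`-⟨u, φ·(Q_n∘σ⁻¹)·D*f⟩`. On the left, `L_{q,ω}` composes with `σ⁻¹` and
`(D_{q,ω}f)∘σ⁻¹ = D*_{q,ω}f`. On the right, the product rule
`D*(Q f) = D*Q·f + (Q∘σ⁻¹)·D*f` and the Pearson equation `⟨u, φ·D*g⟩ = -q⟨u, ψg⟩`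
cancel the remaining terms. -/

section Affine

variable {q ω : ℂ}

theorem hahn_factor_ne_zero (h : q ≠ 1 ∨ ω ≠ 0) : C (q - 1) * X + C ω ≠ 0 := by
  intro h0
  have h1 : q - 1 = 0 := by simpa using congrArg (coeff · 1) h0
  have hω : ω = 0 := by simpa using congrArg (coeff · 0) h0
  rcases h with h | h
  · exact h (sub_eq_zero.mp h1)
  · exact h hω

theorem inv_ne_one_or_neg_div_ne_zero (hq0 : q ≠ 0) (h : q ≠ 1 ∨ ω ≠ 0) :
    q⁻¹ ≠ 1 ∨ -ω / q ≠ 0 := by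
  rcases h with h | h
  · exact .inl (inv_ne_one.mpr h)
  · exact .inr (div_ne_zero (neg_ne_zero.mpr h) hq0)

theorem hahn_shift_comp_shift_inv (hq0 : q ≠ 0) :
    (C q * X + C ω).comp (C q⁻¹ * X + C (-ω / q)) = X := by
  simp only [add_comp, mul_comp, C_comp, X_comp]
  rw [mul_add, ← mul_assoc, ← C_mul, ← C_mul, mul_inv_cancel₀ hq0, mul_div_cancel₀ _ hq0, C_1,
    one_mul, C_neg, neg_add_cancel_right]

theorem hahn_factor_comp_shift_inv (hq0 : q ≠ 0) :
    (C (q - 1) * X + C ω).comp (C q⁻¹ * X + C (-ω / q)) = -(C (q⁻¹ - 1) * X + C (-ω / q)) := by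
  have h1 : (q - 1) * q⁻¹ = -(q⁻¹ - 1) := by field_simp; ring
  have h0 : (q - 1) * (-ω / q) + ω = -(-ω / q) := by field_simp; ring
  simp only [add_comp, mul_comp, C_comp, X_comp]
  rw [mul_add, ← mul_assoc, ← C_mul, ← C_mul, add_assoc, ← C_add, h1, h0, C_neg, C_neg, neg_mul,
    neg_add]

end Affine

namespace IsHahn

variable {q ω : ℂ} {D : Polynomial ℂ →ₗ[ℂ] Polynomial ℂ}

theorem map_mul (hD : IsHahn q ω D) (h : q ≠ 1 ∨ ω ≠ 0) (f g : Polynomial ℂ) :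
    D (f * g) = D f * g + f.comp (C q * X + C ω) * D g := by
  apply mul_left_cancel₀ (hahn_factor_ne_zero h)
  have hfg := hD (f * g)
  rw [mul_comp] at hfg
  linear_combination hfg - g * hD f - f.comp (C q * X + C ω) * hD g

theorem comp_shift_inv (hD : IsHahn q ω D) {D' : Polynomial ℂ →ₗ[ℂ] Polynomial ℂ}
    (hD' : IsHahn q⁻¹ (-ω / q) D') (hq0 : q ≠ 0) (h : q ≠ 1 ∨ ω ≠ 0) (f : Polynomial ℂ) :
    (D f).comp (C q⁻¹ * X + C (-ω / q)) = D' f := by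
  apply mul_left_cancel₀ (hahn_factor_ne_zero (inv_ne_one_or_neg_div_ne_zero hq0 h))
  have hf := congrArg (·.comp (C q⁻¹ * X + C (-ω / q))) (hD f)
  simp only [mul_comp, sub_comp, comp_assoc, hahn_factor_comp_shift_inv hq0,
    hahn_shift_comp_shift_inv hq0, comp_X] at hf
  linear_combination -hf - hD' f

end IsHahn

theorem pMul_apply (φ : Polynomial ℂ) (u : PDual) (f : Polynomial ℂ) :
    pMul φ u f = u (φ * f) := rfl

theorem hahnDual_apply (q : ℂ) (D : Polynomial ℂ →ₗ[ℂ] Polynomial ℂ) (u : PDual)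
    (f : Polynomial ℂ) : hahnDual q D u f = -q⁻¹ * u (D f) := rfl

theorem LDual_apply (q ω : ℂ) (u : PDual) (f : Polynomial ℂ) :
    LDual q ω u f = q⁻¹ * u (f.comp (C q⁻¹ * X + C (-ω / q))) := by
  simp [LDual, Lop, comp_eq_aeval]

theorem hahnDual_inv_pMul_LDual_apply {q ω : ℂ} (hq0 : q ≠ 0) (h : q ≠ 1 ∨ ω ≠ 0)
    {D D' : Polynomial ℂ →ₗ[ℂ] Polynomial ℂ} (hD : IsHahn q ω D) (hD' : IsHahn q⁻¹ (-ω / q) D')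
    (R : Polynomial ℂ) (v : PDual) (f : Polynomial ℂ) :
    hahnDual q⁻¹ D (pMul R (LDual q ω v)) f = -v (R.comp (C q⁻¹ * X + C (-ω / q)) * D' f) := by
  rw [hahnDual_apply, pMul_apply, LDual_apply, mul_comp, hD.comp_shift_inv hD' hq0 h]
  field_simp

theorem apply_mul_eq_of_hahnDual_pMul_eq {q : ℂ} (hq0 : q ≠ 0)
    {D : Polynomial ℂ →ₗ[ℂ] Polynomial ℂ} {φ ψ : Polynomial ℂ} {u : PDual}
    (heq : hahnDual q D (pMul φ u) = pMul ψ u) (g : Polynomial ℂ) :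
    u (φ * D g) = -q * u (ψ * g) := by
  have hg := LinearMap.congr_fun heq g
  rw [hahnDual_apply, pMul_apply, pMul_apply] at hg
  rw [← hg]
  field_simp

theorem pMul_apply_of_hahnDual_pMul_eq {q q' ω' : ℂ} (hq0 : q ≠ 0) (h' : q' ≠ 1 ∨ ω' ≠ 0)
    {D : Polynomial ℂ →ₗ[ℂ] Polynomial ℂ} (hD : IsHahn q' ω' D) {φ ψ : Polynomial ℂ}
    {u : PDual} (heq : hahnDual q D (pMul φ u) = pMul ψ u) (R f : Polynomial ℂ) :
    pMul (φ * D R + C q * (ψ * R)) u f = -u (φ * (R.comp (C q' * X + C ω') * D f)) := by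
  have hRf : (φ * D R + C q * (ψ * R)) * f
      = φ * D (R * f) + q • (ψ * (R * f)) - φ * (R.comp (C q' * X + C ω') * D f) := by
    rw [hD.map_mul h', smul_eq_C_mul]; ring
  rw [pMul_apply, hRf, map_sub, map_add, map_smul, apply_mul_eq_of_hahnDual_pMul_eq hq0 heq,
    smul_eq_mul]
  ring

theorem stmt_7_general (q ω : ℂ) (hq0 : q ≠ 0) (hqω : q ≠ 1 ∨ ω ≠ 0)
    (φ ψ : Polynomial ℂ)
    (Dstar : Polynomial ℂ →ₗ[ℂ] Polynomial ℂ) (hDstar : IsHahn q⁻¹ (-ω / q) Dstar)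
    (Dqw : Polynomial ℂ →ₗ[ℂ] Polynomial ℂ) (hDqw : IsHahn q ω Dqw)
    (u : PDual)
    (heq : hahnDual q Dstar (pMul φ u) = pMul ψ u)
    (Q : ℕ → Polynomial ℂ) :
    ∀ n : ℕ,
      hahnDual q⁻¹ Dqw (pMul (Q n) (LDual q ω (pMul φ u))) =
        pMul (φ * Dstar (Q n) + C q * (ψ * Q n)) u := by
  intro n
  refine LinearMap.ext fun f => ?_
  rw [hahnDual_inv_pMul_LDual_apply hq0 hqω hDqw hDstar,
    pMul_apply_of_hahnDual_pMul_eq hq0 (inv_ne_one_or_neg_div_ne_zero hq0 hqω) hDstar heq,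
    pMul_apply]

theorem stmt_7 (q ω : ℂ) (hq0 : q ≠ 0) (hqω : q ≠ 1 ∨ ω ≠ 0)
    (hqr : ∀ n : ℕ, 0 < n → q ^ n = 1 → q = 1)
    (φ ψ : Polynomial ℂ) (hφ : φ.natDegree ≤ 2) (hψ : ψ.natDegree ≤ 1)
    (Dstar : Polynomial ℂ →ₗ[ℂ] Polynomial ℂ) (hDstar : IsHahn q⁻¹ (-ω / q) Dstar)
    (Dqw : Polynomial ℂ →ₗ[ℂ] Polynomial ℂ) (hDqw : IsHahn q ω Dqw)
    (u : PDual) (hu : u ≠ 0)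
    (heq : hahnDual q Dstar (pMul φ u) = pMul ψ u)
    (Q : ℕ → Polynomial ℂ) (hQ : ∀ n : ℕ, (Q n).degree = (n : WithBot ℕ)) :
    ∀ n : ℕ,
      hahnDual q⁻¹ Dqw (pMul (Q n) (LDual q ω (pMul φ u))) =
        pMul (φ * Dstar (Q n) + C q * (ψ * Q n)) u :=
  stmt_7_general q ω hq0 hqω φ ψ Dstar hDstar Dqw hDqw u heq Q

end HahnOPSPaper
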